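/- Let X̂ and X be n×K real matrices and m = min over rows i of min(‖X̂_i‖, ‖X_i‖) > 0. Let X̂* and X* be obtained by normalizing each row to unit Euclidean length. Then ‖X̂* − X*‖_F ≤ (2/m)·‖X̂ − X‖_F. -/

import Mathlib

open Matrix

/-- Frobenius norm of a real matrix. -/
noncomputable def frobNorm {n K : ℕ} (M : Matrix (Fin n) (Fin K) ℝ) : ℝ :=
  Real.sqrt (∑ i, ∑ j, (M i j) ^ 2)

/-- Euclidean norm of a row vector. -/
noncomputable def rowNorm {K : ℕ} (x : Fin K → ℝ) : ℝ :=
  Real.sqrt (∑ j, (x j) ^ 2)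

/-- Row normalization: each row is divided by its Euclidean length. -/
noncomputable def rowNormalize {n K : ℕ} (M : Matrix (Fin n) (Fin K) ℝ) :
    Matrix (Fin n) (Fin K) ℝ :=
  fun i j => M i j / rowNorm (M i)

/-!
Row by row, `x/‖x‖ - y/‖y‖ = (x - y)/‖x‖ + (1/‖x‖ - 1/‖y‖) y`, and by the reverse triangle
inequality the second term has norm `|‖y‖ - ‖x‖|/‖x‖ ≤ ‖x - y‖/‖x‖`. Hence each row of
`X̂* - X*` has norm at most `(2/m)` times the norm of the same row of `X̂ - X`; squaring and
summing over the rows gives the Frobenius bound.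
-/

section Normalization

variable {E : Type*} [SeminormedAddCommGroup E] [NormedSpace ℝ E]

theorem norm_inv_norm_smul_sub_inv_norm_smul_le {x : E} (hx : 0 < ‖x‖) (y : E) :
    ‖‖x‖⁻¹ • x - ‖y‖⁻¹ • y‖ ≤ 2 / ‖x‖ * ‖x - y‖ := by
  have hsplit : ‖x‖⁻¹ • x - ‖y‖⁻¹ • y = ‖x‖⁻¹ • (x - y) + (‖x‖⁻¹ - ‖y‖⁻¹) • y := by
    rw [smul_sub, sub_smul]; abel
  have hfirst : ‖‖x‖⁻¹ • (x - y)‖ = ‖x - y‖ / ‖x‖ := by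
    rw [norm_smul, norm_inv, norm_norm, inv_mul_eq_div]
  have hsecond : ‖(‖x‖⁻¹ - ‖y‖⁻¹) • y‖ ≤ ‖x - y‖ / ‖x‖ := by
    rcases (norm_nonneg y).eq_or_lt with hy | hy
    · rw [← hy, _root_.inv_zero, sub_zero, norm_smul, ← hy, mul_zero]
      positivity
    rw [norm_smul, Real.norm_eq_abs, inv_sub_inv hx.ne' hy.ne', abs_div,
      abs_of_pos (mul_pos hx hy), div_mul_eq_mul_div, mul_div_mul_right _ _ hy.ne']
    gcongr
    exact abs_sub_comm ‖y‖ ‖x‖ ▸ abs_norm_sub_norm_le x y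
  calc ‖‖x‖⁻¹ • x - ‖y‖⁻¹ • y‖
      ≤ ‖‖x‖⁻¹ • (x - y)‖ + ‖(‖x‖⁻¹ - ‖y‖⁻¹) • y‖ := hsplit ▸ norm_add_le _ _
    _ ≤ ‖x - y‖ / ‖x‖ + ‖x - y‖ / ‖x‖ := by rw [hfirst]; gcongr
    _ = 2 / ‖x‖ * ‖x - y‖ := by ring

end Normalization

section RowNorm

variable {n K : ℕ}

theorem rowNorm_eq_norm_toLp (x : Fin K → ℝ) : rowNorm x = ‖WithLp.toLp 2 x‖ := by
  simp [rowNorm, EuclideanSpace.norm_eq]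

theorem rowNorm_nonneg (x : Fin K → ℝ) : 0 ≤ rowNorm x := Real.sqrt_nonneg _

theorem rowNorm_sq (x : Fin K → ℝ) : rowNorm x ^ 2 = ∑ j, x j ^ 2 :=
  Real.sq_sqrt (by positivity)

theorem rowNorm_inv_smul_sub_inv_smul_le {x : Fin K → ℝ} (hx : 0 < rowNorm x) (y : Fin K → ℝ) :
    rowNorm ((rowNorm x)⁻¹ • x - (rowNorm y)⁻¹ • y) ≤ 2 / rowNorm x * rowNorm (x - y) := by
  simp only [rowNorm_eq_norm_toLp] at hx ⊢
  simpa only [WithLp.toLp_sub, WithLp.toLp_smul] using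
    norm_inv_norm_smul_sub_inv_norm_smul_le hx (WithLp.toLp 2 y)

theorem rowNormalize_sub_rowNormalize_apply (A B : Matrix (Fin n) (Fin K) ℝ) (i : Fin n) :
    (rowNormalize A - rowNormalize B) i = (rowNorm (A i))⁻¹ • A i - (rowNorm (B i))⁻¹ • B i := by
  ext j
  simp [rowNormalize, div_eq_inv_mul]

theorem frobNorm_eq_sqrt_sum_rowNorm_sq (M : Matrix (Fin n) (Fin K) ℝ) :
    frobNorm M = √(∑ i, rowNorm (M i) ^ 2) := by
  simp only [frobNorm, rowNorm_sq]

theorem frobNorm_le_mul_of_rowNorm_le {A B : Matrix (Fin n) (Fin K) ℝ} {c : ℝ} (hc : 0 ≤ c)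
    (h : ∀ i, rowNorm (A i) ≤ c * rowNorm (B i)) : frobNorm A ≤ c * frobNorm B := by
  rw [frobNorm_eq_sqrt_sum_rowNorm_sq, frobNorm_eq_sqrt_sum_rowNorm_sq]
  calc √(∑ i, rowNorm (A i) ^ 2)
      ≤ √(c ^ 2 * ∑ i, rowNorm (B i) ^ 2) := by
        rw [Finset.mul_sum]
        gcongr with i
        rw [← mul_pow]
        exact pow_le_pow_left₀ (rowNorm_nonneg _) (h i) 2
    _ = c * √(∑ i, rowNorm (B i) ^ 2) := by rw [Real.sqrt_mul (sq_nonneg c), Real.sqrt_sq hc]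

end RowNorm

/-- Row-normalization perturbation: if every row of `X̂` and `X` has length at
least `m > 0`, then `‖X̂* − X*‖_F ≤ (2/m) ‖X̂ − X‖_F`. -/
theorem stmt6 {n K : ℕ} (Xhat X : Matrix (Fin n) (Fin K) ℝ) (m : ℝ) (hm : 0 < m)
    (hrow : ∀ i, m ≤ min (rowNorm (Xhat i)) (rowNorm (X i))) :
    frobNorm (rowNormalize Xhat - rowNormalize X) ≤ (2 / m) * frobNorm (Xhat - X) := by
  refine frobNorm_le_mul_of_rowNorm_le (by positivity) fun i => ?_
  have hm_le : m ≤ rowNorm (Xhat i) := (hrow i).trans (min_le_left _ _)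
  rw [rowNormalize_sub_rowNormalize_apply]
  calc _ ≤ 2 / rowNorm (Xhat i) * rowNorm (Xhat i - X i) :=
        rowNorm_inv_smul_sub_inv_smul_le (hm.trans_le hm_le) (X i)
    _ ≤ 2 / m * rowNorm (Xhat i - X i) := by
        gcongr
        exact rowNorm_nonneg _
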